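/- Let Ω be an open convex subset of ℂ^d, p ∈ Ω, x ∈ ∂Ω, and suppose the distance from p to the complement of Ω along the complex line through p and x satisfies δ_Ω(p; x−p) ≥ ε‖x−p‖ for some ε > 0. Define x_t = x + e^{−2t}(p − x) for t ≥ 0. Then for any metric d on Ω satisfying the two-sided Kobayashi bounds ‖v‖/(2δ_Ω(q;v)) ≤ K(q;v) ≤ ‖v‖/δ_Ω(q;v) for the infinitesimal metric K generating d, together with the lower bound d(x_{t₁},x_{t₂}) ≥ |t₁−t₂| from the half-plane projection, one has |t₁−t₂| ≤ d(x_{t₁},x_{t₂}) ≤ (2/ε)|t₁−t₂| for all t₁,t₂ ≥ 0; in particular the segment [p,x) parametrized by x_t is a (2/ε, 0)-quasi-geodesic. The upper bound follows purely from the estimate δ_Ω(x_t; ẋ_t) ≥ ε e^{−2t} and K(q;v) ≤ ‖v‖/δ_Ω(q;v): namely, ∫_{t₁}^{t₂} K(x_t; ẋ_t) dt ≤ (2/ε)|t₂−t₁|. -/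

import Mathlib

noncomputable def lineDist {d : ℕ} (Ω : Set (EuclideanSpace ℂ (Fin d)))
    (q v : EuclideanSpace ℂ (Fin d)) : ℝ :=
  Metric.infDist q {w | w ∉ Ω ∧ ∃ c : ℂ, w = q + c • v}

/-!
The point `x_t` is the image of `p` under the homothety with centre `x` and ratio `a = e^{-2t}`.
By convexity this homothety maps `Ω` into itself, and it maps the complex line through `p` and `x`
onto itself, so a point of the complement on that line at distance `r` from `x_t` is the image of
a point of the complement at distance `r / a` from `p`. Hence `δ_Ω(x_t; ẋ_t) ≥ a ε ‖x - p‖`, while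
`‖ẋ_t‖ = 2 a ‖x - p‖`, so the upper Kobayashi bound gives `K(x_t; ẋ_t) ≤ 2/ε`; integrating along
the curve gives the upper estimate.
-/

open Set

section

variable {d : ℕ} {Ω : Set (EuclideanSpace ℂ (Fin d))} {p q v x : EuclideanSpace ℂ (Fin d)}

lemma lineDist_smul (Ω : Set (EuclideanSpace ℂ (Fin d))) (q v : EuclideanSpace ℂ (Fin d))
    {c : ℂ} (hc : c ≠ 0) : lineDist Ω q (c • v) = lineDist Ω q v := by
  unfold lineDist
  congr 1
  ext w
  refine and_congr_right fun _ => ⟨?_, ?_⟩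
  · rintro ⟨b, rfl⟩
    exact ⟨b * c, by rw [mul_smul]⟩
  · rintro ⟨b, rfl⟩
    exact ⟨b / c, by rw [smul_smul, div_mul_cancel₀ _ hc]⟩

lemma lineDist_real_smul (Ω : Set (EuclideanSpace ℂ (Fin d))) (q v : EuclideanSpace ℂ (Fin d))
    {c : ℝ} (hc : c ≠ 0) : lineDist Ω q (c • v) = lineDist Ω q v := by
  simpa only [Complex.coe_smul] using lineDist_smul Ω q v (c := c) (mod_cast hc)

lemma lineDist_nonneg : 0 ≤ lineDist Ω q v := Metric.infDist_nonneg

lemma mul_lineDist_le_lineDist_homothety {a : ℝ} (ha : 0 < a)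
    (hΩ : ∀ u ∈ Ω, x + a • (u - x) ∈ Ω)
    (hne : {w | w ∉ Ω ∧ ∃ c : ℂ, w = x + a • (q - x) + c • v}.Nonempty) :
    a * lineDist Ω q v ≤ lineDist Ω (x + a • (q - x)) v := by
  unfold lineDist
  rw [Metric.le_infDist hne]
  rintro w ⟨hw, c, rfl⟩
  set u := q + ((a : ℂ)⁻¹ * c) • v
  have hu : x + a • (u - x) = x + a • (q - x) + c • v := by
    have ha' : (a : ℂ) ≠ 0 := by exact_mod_cast ha.ne'
    simp only [u, ← Complex.coe_smul, smul_sub, smul_add, smul_smul, mul_inv_cancel_left₀ ha']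
    abel
  have huΩ : u ∉ Ω := fun h => hw (hu ▸ hΩ u h)
  calc a * lineDist Ω q v ≤ a * dist q u :=
        mul_le_mul_of_nonneg_left (Metric.infDist_le_dist_of_mem ⟨huΩ, _, rfl⟩) ha.le
    _ = dist (x + a • (q - x)) (x + a • (u - x)) := by
        rw [dist_eq_norm, dist_eq_norm, add_sub_add_left_eq_sub, ← smul_sub,
          sub_sub_sub_cancel_right, norm_smul, Real.norm_of_nonneg ha.le]
    _ = dist (x + a • (q - x)) (x + a • (q - x) + c • v) := by rw [hu]

lemma Convex.add_smul_sub_mem_of_isOpen (hconv : Convex ℝ Ω) (hopen : IsOpen Ω)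
    (hx : x ∈ closure Ω) (hp : p ∈ Ω) {a : ℝ} (ha : a ∈ Ioc 0 1) : x + a • (p - x) ∈ Ω := by
  rw [← hopen.interior_eq] at hp ⊢
  exact hconv.add_smul_sub_mem_interior' hx hp ha

lemma mul_lineDist_le_lineDist_add_smul (hopen : IsOpen Ω) (hconv : Convex ℝ Ω)
    (hx : x ∈ frontier Ω) {a : ℝ} (ha : a ∈ Ioc 0 1) :
    a * lineDist Ω p (x - p) ≤ lineDist Ω (x + a • (p - x)) (p - x) := by
  have hxΩ : x ∉ Ω := (hopen.frontier_eq ▸ hx).2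
  rw [← lineDist_real_smul _ _ (x - p) (neg_ne_zero.mpr one_ne_zero), neg_one_smul, neg_sub]
  refine mul_lineDist_le_lineDist_homothety ha.1
    (fun u hu => hconv.add_smul_sub_mem_of_isOpen hopen hx.1 hu ha) ⟨x, hxΩ, -a, ?_⟩
  rw [neg_smul, Complex.coe_smul, add_neg_cancel_right]

lemma norm_div_lineDist_add_smul_le (hopen : IsOpen Ω) (hconv : Convex ℝ Ω) (hp : p ∈ Ω)
    (hx : x ∈ frontier Ω) {ε : ℝ} (hε : 0 < ε) (hδ : ε * ‖x - p‖ ≤ lineDist Ω p (x - p))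
    {a : ℝ} (ha : a ∈ Ioc 0 1) {c : ℝ} (hc : c ≠ 0) :
    ‖c • (p - x)‖ / lineDist Ω (x + a • (p - x)) (c • (p - x)) ≤ |c| / (a * ε) := by
  have hxp : 0 < ‖x - p‖ :=
    norm_pos_iff.mpr (sub_ne_zero.mpr (ne_of_mem_of_not_mem hp (hopen.frontier_eq ▸ hx).2).symm)
  rw [lineDist_real_smul _ _ _ hc, norm_smul, Real.norm_eq_abs, norm_sub_rev]
  calc |c| * ‖x - p‖ / lineDist Ω (x + a • (p - x)) (p - x)
      ≤ |c| * ‖x - p‖ / (a * (ε * ‖x - p‖)) := by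
        gcongr
        · exact mul_pos ha.1 (mul_pos hε hxp)
        · exact (mul_le_mul_of_nonneg_left hδ ha.1.le).trans
            (mul_lineDist_le_lineDist_add_smul hopen hconv hx ha)
    _ = |c| / (a * ε) := by field_simp

lemma norm_le_two_div_along_segment (hopen : IsOpen Ω) (hconv : Convex ℝ Ω)
    (hp : p ∈ Ω) (hx : x ∈ frontier Ω) {ε : ℝ} (hε : 0 < ε)
    (hδ : ε * ‖x - p‖ ≤ lineDist Ω p (x - p))
    {K : EuclideanSpace ℂ (Fin d) → EuclideanSpace ℂ (Fin d) → ℝ}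
    (hK : ∀ q ∈ Ω, ∀ v : EuclideanSpace ℂ (Fin d), v ≠ 0 →
      ‖v‖ / (2 * lineDist Ω q v) ≤ K q v ∧ K q v ≤ ‖v‖ / lineDist Ω q v)
    {a : ℝ} (ha : a ∈ Ioc 0 1) : ‖K (x + a • (p - x)) ((-2 * a) • (p - x))‖ ≤ 2 / ε := by
  have hc : -2 * a ≠ 0 := mul_ne_zero (by norm_num) ha.1.ne'
  have hv : (-2 * a) • (p - x) ≠ 0 :=
    smul_ne_zero hc (sub_ne_zero.mpr (ne_of_mem_of_not_mem hp (hopen.frontier_eq ▸ hx).2))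
  obtain ⟨hlo, hup⟩ := hK _ (hconv.add_smul_sub_mem_of_isOpen hopen hx.1 hp ha) _ hv
  rw [Real.norm_of_nonneg
    ((div_nonneg (norm_nonneg _) (mul_nonneg zero_le_two lineDist_nonneg)).trans hlo)]
  calc _ ≤ _ := hup
    _ ≤ |-2 * a| / (a * ε) := norm_div_lineDist_add_smul_le hopen hconv hp hx hε hδ ha hc
    _ = 2 / ε := by
      rw [abs_mul, abs_of_pos ha.1]
      field_simp
      norm_num [ha.1.ne']

end

theorem stmt_15 (d : ℕ) (Ω : Set (EuclideanSpace ℂ (Fin d)))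
    (hopen : IsOpen Ω) (hconv : Convex ℝ Ω)
    (p : EuclideanSpace ℂ (Fin d)) (hp : p ∈ Ω)
    (x : EuclideanSpace ℂ (Fin d)) (hx : x ∈ frontier Ω)
    (ε : ℝ) (hε : 0 < ε)
    (hδ : ε * ‖x - p‖ ≤ lineDist Ω p (x - p))
    (σ : ℝ → EuclideanSpace ℂ (Fin d))
    (hσ : ∀ t, σ t = x + Real.exp (-2 * t) • (p - x))
    (dΩ : EuclideanSpace ℂ (Fin d) → EuclideanSpace ℂ (Fin d) → ℝ)
    (hdsym : ∀ a b, dΩ a b = dΩ b a)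
    (K : EuclideanSpace ℂ (Fin d) → EuclideanSpace ℂ (Fin d) → ℝ)
    (hK : ∀ q ∈ Ω, ∀ v : EuclideanSpace ℂ (Fin d), v ≠ 0 →
      ‖v‖ / (2 * lineDist Ω q v) ≤ K q v ∧ K q v ≤ ‖v‖ / lineDist Ω q v)
    (hlow : ∀ t₁ t₂ : ℝ, 0 ≤ t₁ → 0 ≤ t₂ → |t₁ - t₂| ≤ dΩ (σ t₁) (σ t₂))
    (hlen : ∀ t₁ t₂ : ℝ, 0 ≤ t₁ → t₁ ≤ t₂ →
      dΩ (σ t₁) (σ t₂) ≤ ∫ t in t₁..t₂, K (σ t) ((-2 * Real.exp (-2 * t)) • (p - x))) :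
    ∀ t₁ t₂ : ℝ, 0 ≤ t₁ → 0 ≤ t₂ →
      |t₁ - t₂| ≤ dΩ (σ t₁) (σ t₂) ∧ dΩ (σ t₁) (σ t₂) ≤ (2 / ε) * |t₁ - t₂| := by
  have hexp : ∀ t : ℝ, 0 ≤ t → Real.exp (-2 * t) ∈ Ioc 0 1 := fun t ht =>
    ⟨Real.exp_pos _, Real.exp_le_one_iff.mpr (by linarith)⟩
  have hupper : ∀ t₁ t₂ : ℝ, 0 ≤ t₁ → t₁ ≤ t₂ → dΩ (σ t₁) (σ t₂) ≤ 2 / ε * |t₂ - t₁| :=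
    fun t₁ t₂ h1 h12 => (hlen t₁ t₂ h1 h12).trans <| (le_abs_self _).trans <|
      intervalIntegral.norm_integral_le_of_norm_le_const fun t ht => hσ t ▸
        norm_le_two_div_along_segment hopen hconv hp hx hε hδ hK
          (hexp t ((le_min h1 (h1.trans h12)).trans ht.1.le))
  intro t₁ t₂ h1 h2
  refine ⟨hlow t₁ t₂ h1 h2, ?_⟩
  rcases le_total t₁ t₂ with h | h
  · rw [abs_sub_comm]; exact hupper t₁ t₂ h1 h
  · rw [hdsym]; exact hupper t₂ t₁ h2 h
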